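/- Let μ_n := E(X_n) be the expected internal path-length of random symmetric digital search trees, satisfying μ_0 = 0 and μ_{n+1} = 2^{1-n} ∑_{0≤j≤n} C(n,j) μ_j + n for n ≥ 0. Then the coefficients of its Poisson generating function satisfy n![z^n] (e^{-z} ∑_k μ_k z^k/k!) = (-1)^n Q_{n-2} for n ≥ 2, where Q_m := ∏_{1≤i≤m}(1 - 2^{-i}). -/

import Mathlib

/-- Q_m = ∏_{1≤i≤m} (1 - 2^{-i}). -/
noncomputable def Qfin (m : ℕ) : ℂ := ∏ i ∈ Finset.range m, (1 - (1 : ℂ) / 2 ^ (i + 1))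

/-! Multiplying an exponential generating function by `e^z` applies the binomial transform
`T g n = ∑ C(n,j) g j` to its coefficients, so the claim is that `μ = T b` with `b_0 = b_1 = 0`
and `b_n = (-1)^n Q_{n-2}`. The recurrence determines `μ` from `μ_0`, so it suffices that `T b`
satisfies it. By Pascal's rule and `T (T b) m = ∑ C(m,i) 2^(m-i) b_i`, this reduces to
`b_j + b_{j+1} = 2^(1-j) b_j + [j = 1]`, i.e. `b_2 = 1` and `b_{n+1} = -(1 - 2^(1-n)) b_n` for
`n ≥ 2`. Since `|b_n| ≤ 1`, `f = e^{-z} e^z ∑ b_n z^n/n!` is an entire power series whose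
`n`-th Taylor coefficient is `b_n / n!`. -/

open Finset

section BinomialTransform

variable {R : Type*} [CommSemiring R]

def binomialTransform (g : ℕ → R) (n : ℕ) : R := ∑ j ∈ range (n + 1), (n.choose j : R) * g j

theorem binomialTransform_zero (g : ℕ → R) : binomialTransform g 0 = g 0 := by
  simp [binomialTransform]

theorem binomialTransform_succ (g : ℕ → R) (m : ℕ) :
    binomialTransform g (m + 1) = binomialTransform (fun j => g j + g (j + 1)) m := by
  simp only [binomialTransform, mul_add, sum_add_distrib]
  rw [sum_range_succ']
  simp only [Nat.choose_succ_succ', Nat.cast_add, add_mul, sum_add_distrib]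
  rw [sum_range_succ (fun k => (m.choose (k + 1) : R) * g (k + 1)),
    sum_range_succ' (fun k => (m.choose k : R) * g k)]
  simp only [Nat.choose_succ_self, Nat.choose_zero_right, Nat.cast_zero, Nat.cast_one, zero_mul]
  ring

theorem binomialTransform_eq_sum_range (g : ℕ → R) {n N : ℕ} (h : n < N) :
    binomialTransform g n = ∑ j ∈ range N, (n.choose j : R) * g j := by
  refine sum_subset (range_subset_range.2 h) fun j _ hj => ?_
  rw [Nat.choose_eq_zero_of_lt (by simpa using hj), Nat.cast_zero, zero_mul]

theorem Nat.sum_range_choose_mul_choose {m i : ℕ} (hi : i ≤ m) :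
    ∑ j ∈ range (m + 1), m.choose j * j.choose i = m.choose i * 2 ^ (m - i) := by
  rw [← Nat.sum_range_choose, mul_sum, range_eq_Ico,
    ← sum_Ico_consecutive _ (Nat.zero_le i) (by omega : i ≤ m + 1),
    sum_eq_zero fun j hj => by rw [Nat.choose_eq_zero_of_lt (mem_Ico.1 hj).2, mul_zero],
    zero_add, sum_Ico_eq_sum_range, show m + 1 - i = m - i + 1 by omega]
  exact sum_congr rfl fun t _ => by rw [Nat.choose_mul (by omega), Nat.add_sub_cancel_left]

theorem binomialTransform_binomialTransform (g : ℕ → R) (m : ℕ) :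
    binomialTransform (binomialTransform g) m
      = ∑ i ∈ range (m + 1), (m.choose i : R) * 2 ^ (m - i) * g i := by
  calc binomialTransform (binomialTransform g) m
      = ∑ j ∈ range (m + 1), ∑ i ∈ range (m + 1), (m.choose j : R) * (j.choose i * g i) := by
        refine sum_congr rfl fun j hj => ?_
        rw [binomialTransform_eq_sum_range g (mem_range.1 hj), mul_sum]
    _ = ∑ i ∈ range (m + 1), (m.choose i : R) * 2 ^ (m - i) * g i := by
        rw [sum_comm]
        refine sum_congr rfl fun i hi => ?_
        have := Nat.sum_range_choose_mul_choose (Nat.lt_succ_iff.1 (mem_range.1 hi))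
        simp only [← mul_assoc, ← sum_mul]
        exact_mod_cast congrArg (fun k : ℕ => (k : R) * g i) this

end BinomialTransform

section Recurrence

variable {K : Type*} [Field K] [NeZero (2 : K)]

theorem binomialTransform_succ_of_add_succ {b : ℕ → K}
    (hb : ∀ j, b j + b (j + 1) = 2 / 2 ^ j * b j + if j = 1 then 1 else 0) (m : ℕ) :
    binomialTransform b (m + 1)
      = 2 / 2 ^ m * binomialTransform (binomialTransform b) m + m := by
  have hsingle : ∑ j ∈ range (m + 1), (m.choose j : K) * (if j = 1 then 1 else 0) = m := by
    rcases Nat.eq_zero_or_pos m with rfl | hm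
    · simp
    · simp [sum_ite_eq', show 1 < m + 1 by omega]
  have hpow : ∀ i ≤ m, (2 : K) / 2 ^ m * 2 ^ (m - i) = 2 / 2 ^ i := fun i hi => by
    rw [← pow_mul_pow_sub (2 : K) hi]
    field_simp
  rw [binomialTransform_succ, binomialTransform, binomialTransform_binomialTransform]
  simp only [hb, mul_add, sum_add_distrib, hsingle, mul_sum]
  congr 1
  refine sum_congr rfl fun i hi => ?_
  rw [← hpow i (Nat.lt_succ_iff.1 (mem_range.1 hi))]
  ring

theorem eq_binomialTransform_of_recurrence {μ b : ℕ → K} (h0 : μ 0 = b 0)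
    (hrec : ∀ n, μ (n + 1) = 2 / 2 ^ n * ∑ j ∈ range (n + 1), (n.choose j : K) * μ j + n)
    (hb : ∀ j, b j + b (j + 1) = 2 / 2 ^ j * b j + if j = 1 then 1 else 0) (n : ℕ) :
    μ n = binomialTransform b n := by
  induction n using Nat.strong_induction_on with
  | _ n ih =>
    cases n with
    | zero => rw [h0, binomialTransform_zero]
    | succ m =>
      rw [hrec, binomialTransform_succ_of_add_succ hb, binomialTransform]
      congr 2
      exact sum_congr rfl fun j hj => by rw [ih j (by simpa [Nat.lt_succ_iff] using hj)]

end Recurrence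

noncomputable def dstPoissonCoeff (n : ℕ) : ℂ := if n < 2 then 0 else (-1) ^ n * Qfin (n - 2)

theorem dstPoissonCoeff_succ {n : ℕ} (hn : 2 ≤ n) :
    dstPoissonCoeff (n + 1) = -(1 - 2 / 2 ^ n) * dstPoissonCoeff n := by
  obtain ⟨m, rfl⟩ := Nat.exists_eq_add_of_le' hn
  have h2 : (2 : ℂ) / 2 ^ (m + 2) = 1 / 2 ^ (m + 1) := by
    rw [pow_succ]
    field_simp
  rw [dstPoissonCoeff, dstPoissonCoeff, if_neg (by omega), if_neg (by omega),
    show m + 2 + 1 - 2 = m + 1 by omega, Nat.add_sub_cancel, Qfin, Qfin, prod_range_succ, h2]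
  ring

theorem dstPoissonCoeff_add_succ (j : ℕ) :
    dstPoissonCoeff j + dstPoissonCoeff (j + 1)
      = 2 / 2 ^ j * dstPoissonCoeff j + if j = 1 then 1 else 0 := by
  rcases lt_or_ge j 2 with hj | hj
  · interval_cases j <;> simp [dstPoissonCoeff, Qfin]
  · rw [dstPoissonCoeff_succ hj, if_neg (by omega)]
    ring

theorem norm_Qfin_le_one (m : ℕ) : ‖Qfin m‖ ≤ 1 := by
  rw [Qfin, norm_prod]
  refine prod_le_one (fun _ _ => norm_nonneg _) fun i _ => ?_
  have hi : (0 : ℝ) < 1 / 2 ^ (i + 1) ∧ (1 : ℝ) / 2 ^ (i + 1) ≤ 1 :=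
    ⟨by positivity, div_le_one_of_le₀ (one_le_pow₀ one_le_two) (by positivity)⟩
  have hcast : (1 : ℂ) - 1 / 2 ^ (i + 1) = ((1 - 1 / 2 ^ (i + 1) : ℝ) : ℂ) := by push_cast; rfl
  rw [hcast, Complex.norm_real, Real.norm_of_nonneg (by linarith)]
  linarith

theorem norm_dstPoissonCoeff_le_one (n : ℕ) : ‖dstPoissonCoeff n‖ ≤ 1 := by
  unfold dstPoissonCoeff
  split_ifs
  · simp
  · simpa using norm_Qfin_le_one (n - 2)

theorem summable_norm_mul_pow_div_factorial {g : ℕ → ℂ} {C : ℝ} (hg : ∀ n, ‖g n‖ ≤ C) (z : ℂ) :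
    Summable fun n => ‖g n * z ^ n / (n.factorial : ℂ)‖ := by
  refine .of_nonneg_of_le (fun _ => norm_nonneg _) (fun n => ?_)
    ((Real.summable_pow_div_factorial ‖z‖).mul_left C)
  rw [norm_div, norm_mul, norm_pow, Complex.norm_natCast, mul_div_assoc]
  gcongr
  exact hg n

theorem tsum_mul_cexp {g : ℕ → ℂ} {C : ℝ} (hg : ∀ n, ‖g n‖ ≤ C) (z : ℂ) :
    (∑' n, g n * z ^ n / (n.factorial : ℂ)) * Complex.exp z
      = ∑' n, binomialTransform g n * z ^ n / (n.factorial : ℂ) := by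
  have hexp : Complex.exp z = ∑' n, (1 : ℂ) * z ^ n / (n.factorial : ℂ) := by
    simp [Complex.exp_eq_exp_ℂ, NormedSpace.exp_eq_tsum_div]
  rw [hexp, tsum_mul_tsum_eq_tsum_sum_range_of_summable_norm
    (summable_norm_mul_pow_div_factorial hg z)
    (summable_norm_mul_pow_div_factorial (fun _ => norm_one.le) z)]
  refine tsum_congr fun n => ?_
  rw [binomialTransform, sum_mul, sum_div]
  refine sum_congr rfl fun j hj => ?_
  have hjn : j ≤ n := Nat.lt_succ_iff.1 (mem_range.1 hj)
  have hn : (n.factorial : ℂ) ≠ 0 := mod_cast n.factorial_ne_zero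
  rw [Nat.cast_choose ℂ hjn, ← pow_mul_pow_sub z hjn]
  field_simp

theorem iteratedDeriv_zero_eq_of_eq_tsum {f : ℂ → ℂ} {c : ℕ → ℂ} {C : ℝ} (hc : ∀ n, ‖c n‖ ≤ C)
    (hf : ∀ z, f z = ∑' n, c n * z ^ n / (n.factorial : ℂ)) (n : ℕ) :
    iteratedDeriv n f 0 = c n := by
  set p := FormalMultilinearSeries.ofScalars ℂ fun n => c n / n.factorial
  have hrad : 1 ≤ p.radius := p.le_radius_of_bound C fun n => by
    rw [FormalMultilinearSeries.ofScalars_norm, NNReal.coe_one, one_pow, mul_one, norm_div,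
      Complex.norm_natCast]
    exact (div_le_self (norm_nonneg _) (mod_cast n.factorial_pos)).trans (hc n)
  have hsum : p.sum = f := funext fun z => by
    rw [hf, FormalMultilinearSeries.sum]
    exact tsum_congr fun n => by
      rw [FormalMultilinearSeries.ofScalars_apply_eq, smul_eq_mul]
      ring
  have hp : HasFPowerSeriesAt f p 0 :=
    hsum ▸ (p.hasFPowerSeriesOnBall (zero_lt_one.trans_le hrad)).hasFPowerSeriesAt
  have hcoeff := congrFun (FormalMultilinearSeries.ofScalars_series_injective ℂ ℂ
    (hp.analyticAt.hasFPowerSeriesAt.eq_formalMultilinearSeries hp)) n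
  exact (div_left_inj' (mod_cast n.factorial_ne_zero)).1 hcoeff

theorem poisson_coeff_dst_mean (μ : ℕ → ℝ) (h0 : μ 0 = 0)
    (hrec : ∀ n : ℕ,
      μ (n + 1) = (2 / 2 ^ n) * ∑ j ∈ Finset.range (n + 1), (n.choose j : ℝ) * μ j + n)
    (f : ℂ → ℂ)
    (hf : ∀ z : ℂ, f z = Complex.exp (-z) * ∑' k : ℕ, (μ k : ℂ) * z ^ k / (k.factorial : ℂ))
    (n : ℕ) (hn : 2 ≤ n) :
    iteratedDeriv n f 0 = (-1 : ℂ) ^ n * Qfin (n - 2) := by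
  have hμ : ∀ k, (μ k : ℂ) = binomialTransform dstPoissonCoeff k :=
    eq_binomialTransform_of_recurrence (by simp [h0, dstPoissonCoeff])
      (fun k => by rw [hrec k]; push_cast; rfl) dstPoissonCoeff_add_succ
  have hf' : ∀ z, f z = ∑' k, dstPoissonCoeff k * z ^ k / (k.factorial : ℂ) := fun z => by
    simp only [hf, hμ, ← tsum_mul_cexp norm_dstPoissonCoeff_le_one z]
    rw [mul_comm, mul_assoc, ← Complex.exp_add, add_neg_cancel, Complex.exp_zero, mul_one]
  rw [iteratedDeriv_zero_eq_of_eq_tsum norm_dstPoissonCoeff_le_one hf', dstPoissonCoeff,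
    if_neg (by omega)]
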